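/- The form Q_- on g = h ⊕ d ⊕ h* given by Q_-((h1,x1,α1),(h2,x2,α2)) := −⟨h1,h2⟩_h + ⟨x1,x2⟩_d + α1(h2) + α2(h1) is nondegenerate, ad-invariant (Q_-([u,v],w) = −Q_-(v,[u,w])), and restricts nondegenerately to h. Its orthogonal complement m := h^⊥ equals {(h, x, ℓ(h)) : h ∈ h, x ∈ d}, and m is ad(h)-invariant: [h, m] ⊆ m. The linear map λ : G(d) → m, λ(x + ℓ(h)) = (h, x, ℓ(h)), is a linear isometry from (G(d), ⟨,⟩) onto (m, Q_-|_{m×m}), and the decomposition g = h ⊕ m is naturally reductive: Q_-([u,v]_m, w) + Q_-(v, [u,w]_m) = 0 for all u,v,w ∈ m, where u_m denotes the m-component of u ∈ g along h. -/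

import Mathlib

/-!
All claims except natural reductivity are direct computations in the three components of
`g = h ⊕ d ⊕ h*`. For natural reductivity, `u - u_m` lies in `h`, which is `Q₋`-orthogonal to `m`,
so `Q₋(u_m, w) = Q₋(u, w)` for `w ∈ m`; the identity then follows from the symmetry and
ad-invariance of `Q₋`.
-/

open Module

variable {H D : Type} [LieRing H] [LieAlgebra ℝ H] [FiniteDimensional ℝ H]
  [LieRing D] [LieAlgebra ℝ D] [FiniteDimensional ℝ D]

/-- `beta BD π x y` is the element `β(x,y)` of `h*` given by `a ↦ ⟨π(a)x, y⟩_d`. -/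
def beta (BD : LinearMap.BilinForm ℝ D) (π : H →ₗ[ℝ] D →ₗ[ℝ] D) (x y : D) : Dual ℝ H :=
  (BD.flip y).comp (π.flip x)

/-- The double extension bracket on `g = h ⊕ d ⊕ h*`. -/
def dbr (BD : LinearMap.BilinForm ℝ D) (π : H →ₗ[ℝ] D →ₗ[ℝ] D)
    (u v : H × D × Dual ℝ H) : H × D × Dual ℝ H :=
  (⁅u.1, v.1⁆,
   ⁅u.2.1, v.2.1⁆ + π u.1 v.2.1 - π v.1 u.2.1,
   beta BD π u.2.1 v.2.1 - v.2.2.comp (LieAlgebra.ad ℝ H u.1)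
     + u.2.2.comp (LieAlgebra.ad ℝ H v.1))

/-- The form `Q₋((h₁,x₁,α₁),(h₂,x₂,α₂)) = −⟨h₁,h₂⟩_h + ⟨x₁,x₂⟩_d + α₁(h₂) + α₂(h₁)`. -/
def Qminus (BH : LinearMap.BilinForm ℝ H) (BD : LinearMap.BilinForm ℝ D)
    (u v : H × D × Dual ℝ H) : ℝ :=
  - BH u.1 v.1 + BD u.2.1 v.2.1 + u.2.2 v.1 + v.2.2 u.1

/-- The inverse of the isomorphism `ℓ : h → h*`, `ℓ(h) = ⟨h,·⟩_h`. -/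
noncomputable def ellInv (BH : LinearMap.BilinForm ℝ H) (hBH : BH.Nondegenerate)
    (α : Dual ℝ H) : H :=
  (LinearMap.BilinForm.toDual BH hBH).symm α

/-- The metric on `G(d)`: `⟨x₁ + ℓ(h₁), x₂ + ℓ(h₂)⟩ = ⟨h₁,h₂⟩_h + ⟨x₁,x₂⟩_d`. -/
noncomputable def gform (BH : LinearMap.BilinForm ℝ H) (hBH : BH.Nondegenerate)
    (BD : LinearMap.BilinForm ℝ D) (u v : D × Dual ℝ H) : ℝ :=
  BD u.1 v.1 + BH (ellInv BH hBH u.2) (ellInv BH hBH v.2)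

/-- The map `λ : G(d) → m`, `λ(x + ℓ(h)) = (h, x, ℓ(h))`. -/
noncomputable def lam (BH : LinearMap.BilinForm ℝ H) (hBH : BH.Nondegenerate)
    (u : D × Dual ℝ H) : H × D × Dual ℝ H :=
  (ellInv BH hBH u.2, u.1, u.2)

/-- The projection of `g` onto `m = {(h,x,ℓ(h))}` along `h`. -/
noncomputable def pmG (BH : LinearMap.BilinForm ℝ H) (hBH : BH.Nondegenerate)
    (w : H × D × Dual ℝ H) : H × D × Dual ℝ H :=
  (ellInv BH hBH w.2.2, w.2.1, w.2.2)

section Form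

variable {𝔥 𝔡 : Type} [LieRing 𝔥] [LieAlgebra ℝ 𝔥] [LieRing 𝔡] [LieAlgebra ℝ 𝔡]
  (BH : LinearMap.BilinForm ℝ 𝔥) (BD : LinearMap.BilinForm ℝ 𝔡)

@[simp]
lemma beta_apply (π : 𝔥 →ₗ[ℝ] 𝔡 →ₗ[ℝ] 𝔡) (x y : 𝔡) (a : 𝔥) :
    beta BD π x y a = BD (π a x) y :=
  rfl

lemma Qminus_comm (hBHsymm : ∀ a b : 𝔥, BH a b = BH b a) (hBDsymm : ∀ x y : 𝔡, BD x y = BD y x)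
    (u v : 𝔥 × 𝔡 × Dual ℝ 𝔥) : Qminus BH BD u v = Qminus BH BD v u := by
  simp only [Qminus, hBHsymm u.1, hBDsymm u.2.1]
  ring

lemma Qminus_inl_right (u : 𝔥 × 𝔡 × Dual ℝ 𝔥) (a : 𝔥) :
    Qminus BH BD u (a, 0, 0) = u.2.2 a - BH u.1 a := by
  simp only [Qminus, map_zero, LinearMap.zero_apply]
  ring

lemma eq_zero_of_forall_Qminus_eq_zero (hBDnd : BD.Nondegenerate) (u : 𝔥 × 𝔡 × Dual ℝ 𝔥)
    (hu : ∀ v, Qminus BH BD u v = 0) : u = 0 := by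
  obtain ⟨a, x, α⟩ := u
  have ha : a = 0 := by
    refine (Module.forall_dual_apply_eq_zero_iff ℝ a).mp fun β ↦ ?_
    simpa [Qminus] using hu (0, 0, β)
  have hx : x = 0 := hBDnd.1 x fun y ↦ by simpa [Qminus] using hu (0, y, 0)
  have hα : α = 0 := LinearMap.ext fun b ↦ by simpa [Qminus_inl_right, ha] using hu (b, 0, 0)
  simp [ha, hx, hα]

lemma eq_zero_of_forall_Qminus_inl_inl_eq_zero (hBHnd : BH.Nondegenerate) (a : 𝔥)
    (ha : ∀ b : 𝔥, Qminus BH BD (a, 0, 0) (b, 0, 0) = 0) : a = 0 :=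
  hBHnd.1 a fun b ↦ by simpa [Qminus_inl_right] using ha b

lemma forall_Qminus_inl_eq_zero_iff (u : 𝔥 × 𝔡 × Dual ℝ 𝔥) :
    (∀ a : 𝔥, Qminus BH BD u (a, 0, 0) = 0) ↔ u.2.2 = BH u.1 := by
  simp only [Qminus_inl_right, sub_eq_zero]
  exact LinearMap.ext_iff.symm

lemma Qminus_dbr_left (hBHinv : ∀ a b c : 𝔥, BH ⁅a, b⁆ c = - BH b ⁅a, c⁆)
    (hBDsymm : ∀ x y : 𝔡, BD x y = BD y x)
    (hBDinv : ∀ x y z : 𝔡, BD ⁅x, y⁆ z = - BD y ⁅x, z⁆) (π : 𝔥 →ₗ[ℝ] 𝔡 →ₗ[ℝ] 𝔡)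
    (hπskew : ∀ a : 𝔥, ∀ x y : 𝔡, BD (π a x) y = - BD x (π a y))
    (u v w : 𝔥 × 𝔡 × Dual ℝ 𝔥) :
    Qminus BH BD (dbr BD π u v) w = - Qminus BH BD v (dbr BD π u w) := by
  obtain ⟨a, x, α⟩ := u
  obtain ⟨b, y, β⟩ := v
  obtain ⟨c, z, γ⟩ := w
  simp only [Qminus, dbr, LinearMap.sub_apply, LinearMap.add_apply, LinearMap.comp_apply,
    LieAlgebra.ad_apply, beta_apply, map_add, map_sub]
  have hα : α ⁅b, c⁆ = - α ⁅c, b⁆ := by rw [← lie_skew b c, map_neg]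
  linear_combination - hBHinv a b c + hBDinv x y z + hπskew a y z + hBDsymm (π c x) y + hα

lemma dbr_inl_snd_snd_eq_of_snd_snd_eq (hBHinv : ∀ a b c : 𝔥, BH ⁅a, b⁆ c = - BH b ⁅a, c⁆)
    (π : 𝔥 →ₗ[ℝ] 𝔡 →ₗ[ℝ] 𝔡) (a : 𝔥) (u : 𝔥 × 𝔡 × Dual ℝ 𝔥)
    (hu : u.2.2 = BH u.1) : (dbr BD π (a, 0, 0) u).2.2 = BH (dbr BD π (a, 0, 0) u).1 := by
  ext c
  simp only [dbr, hu, LinearMap.add_apply, LinearMap.sub_apply, LinearMap.comp_apply,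
    LieAlgebra.ad_apply, beta_apply, map_zero, LinearMap.zero_apply, zero_lie]
  linear_combination - hBHinv a u.1 c

end Form

section Reductive

variable {𝔥 𝔡 : Type} [LieRing 𝔥] [LieAlgebra ℝ 𝔥] [FiniteDimensional ℝ 𝔥]
  (BH : LinearMap.BilinForm ℝ 𝔥) (hBH : BH.Nondegenerate)

@[simp]
lemma apply_ellInv (α : Dual ℝ 𝔥) : BH (ellInv BH hBH α) = α :=
  LinearMap.ext (LinearMap.BilinForm.apply_toDual_symm_apply α)

@[simp]
lemma ellInv_apply (a : 𝔥) : ellInv BH hBH (BH a) = a :=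
  (BH.toDual hBH).symm_apply_apply a

lemma lam_add [Add 𝔡] (u v : 𝔡 × Dual ℝ 𝔥) :
    lam BH hBH (u + v) = lam BH hBH u + lam BH hBH v := by
  simp [lam, ellInv, Prod.ext_iff]

lemma lam_smul [SMul ℝ 𝔡] (c : ℝ) (u : 𝔡 × Dual ℝ 𝔥) : lam BH hBH (c • u) = c • lam BH hBH u := by
  simp [lam, ellInv, Prod.ext_iff]

lemma lam_snd_snd (u : 𝔡 × Dual ℝ 𝔥) : (lam BH hBH u).2.2 = BH (lam BH hBH u).1 := by
  simp [lam]

lemma existsUnique_lam_eq (w : 𝔥 × 𝔡 × Dual ℝ 𝔥) (hw : w.2.2 = BH w.1) :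
    ∃! u : 𝔡 × Dual ℝ 𝔥, lam BH hBH u = w := by
  refine ⟨(w.2.1, w.2.2), by simp [lam, Prod.ext_iff, hw], fun u hu ↦ ?_⟩
  subst hu
  rfl

variable [LieRing 𝔡] [LieAlgebra ℝ 𝔡] (BD : LinearMap.BilinForm ℝ 𝔡)

lemma Qminus_lam_lam (hBHsymm : ∀ a b : 𝔥, BH a b = BH b a) (u v : 𝔡 × Dual ℝ 𝔥) :
    Qminus BH BD (lam BH hBH u) (lam BH hBH v) = gform BH hBH BD u v := by
  have h := hBHsymm (ellInv BH hBH u.2) (ellInv BH hBH v.2)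
  simp only [apply_ellInv] at h
  simp only [Qminus, lam, gform, apply_ellInv]
  linarith

lemma Qminus_pmG_left (hBHsymm : ∀ a b : 𝔥, BH a b = BH b a) (u w : 𝔥 × 𝔡 × Dual ℝ 𝔥)
    (hw : w.2.2 = BH w.1) :
    Qminus BH BD (pmG BH hBH u) w = Qminus BH BD u w := by
  simp only [Qminus, pmG, hw, hBHsymm w.1, apply_ellInv]
  ring

lemma Qminus_pmG_dbr_add_Qminus_pmG_dbr (hBHsymm : ∀ a b : 𝔥, BH a b = BH b a)
    (hBDsymm : ∀ x y : 𝔡, BD x y = BD y x)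
    (hBHinv : ∀ a b c : 𝔥, BH ⁅a, b⁆ c = - BH b ⁅a, c⁆)
    (hBDinv : ∀ x y z : 𝔡, BD ⁅x, y⁆ z = - BD y ⁅x, z⁆) (π : 𝔥 →ₗ[ℝ] 𝔡 →ₗ[ℝ] 𝔡)
    (hπskew : ∀ a : 𝔥, ∀ x y : 𝔡, BD (π a x) y = - BD x (π a y))
    (u v w : 𝔥 × 𝔡 × Dual ℝ 𝔥) (hv : v.2.2 = BH v.1) (hw : w.2.2 = BH w.1) :
    Qminus BH BD (pmG BH hBH (dbr BD π u v)) w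
      + Qminus BH BD v (pmG BH hBH (dbr BD π u w)) = 0 := by
  rw [Qminus_comm BH BD hBHsymm hBDsymm v, Qminus_pmG_left BH hBH BD hBHsymm _ _ hw,
    Qminus_pmG_left BH hBH BD hBHsymm _ _ hv, Qminus_comm BH BD hBHsymm hBDsymm _ v,
    Qminus_dbr_left BH BD hBHinv hBDsymm hBDinv π hπskew]
  ring

end Reductive

theorem Gd_naturally_reductive_general
    (BH : LinearMap.BilinForm ℝ H)
    (hBHsymm : ∀ a b : H, BH a b = BH b a)
    (hBHnd : BH.Nondegenerate)
    (hBHinv : ∀ a b c : H, BH ⁅a, b⁆ c = - BH b ⁅a, c⁆)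
    (BD : LinearMap.BilinForm ℝ D)
    (hBDsymm : ∀ x y : D, BD x y = BD y x)
    (hBDnd : BD.Nondegenerate)
    (hBDinv : ∀ x y z : D, BD ⁅x, y⁆ z = - BD y ⁅x, z⁆)
    (π : H →ₗ[ℝ] D →ₗ[ℝ] D)
    (hπskew : ∀ a : H, ∀ x y : D, BD (π a x) y = - BD x (π a y)) :
    -- Q₋ is nondegenerate
    (∀ u : H × D × Dual ℝ H, (∀ v : H × D × Dual ℝ H, Qminus BH BD u v = 0) → u = 0) ∧
    -- Q₋ is ad-invariant
    (∀ u v w : H × D × Dual ℝ H,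
      Qminus BH BD (dbr BD π u v) w = - Qminus BH BD v (dbr BD π u w)) ∧
    -- Q₋ restricts nondegenerately to h
    (∀ a : H, (∀ b : H, Qminus BH BD (a, 0, 0) (b, 0, 0) = 0) → a = 0) ∧
    -- m := h^⊥ equals {(h, x, ℓ(h))}
    (∀ u : H × D × Dual ℝ H, (∀ a : H, Qminus BH BD u (a, 0, 0) = 0) ↔ u.2.2 = BH u.1) ∧
    -- m is ad(h)-invariant: [h, m] ⊆ m
    (∀ a : H, ∀ u : H × D × Dual ℝ H, u.2.2 = BH u.1 →
      (dbr BD π (a, 0, 0) u).2.2 = BH (dbr BD π (a, 0, 0) u).1) ∧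
    -- λ is linear
    (∀ u v : D × Dual ℝ H, lam BH hBHnd (u + v) = lam BH hBHnd u + lam BH hBHnd v) ∧
    (∀ (c : ℝ) (u : D × Dual ℝ H), lam BH hBHnd (c • u) = c • lam BH hBHnd u) ∧
    -- λ maps G(d) bijectively onto m
    (∀ u : D × Dual ℝ H, (lam BH hBHnd u).2.2 = BH (lam BH hBHnd u).1) ∧
    (∀ w : H × D × Dual ℝ H, w.2.2 = BH w.1 → ∃! u : D × Dual ℝ H, lam BH hBHnd u = w) ∧
    -- λ is an isometry from (G(d), ⟨,⟩) to (m, Q₋|_{m×m})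
    (∀ u v : D × Dual ℝ H,
      Qminus BH BD (lam BH hBHnd u) (lam BH hBHnd v) = gform BH hBHnd BD u v) ∧
    -- pmG is the projection onto m along h
    (∀ w : H × D × Dual ℝ H, (pmG BH hBHnd w).2.2 = BH (pmG BH hBHnd w).1 ∧
      (w - pmG BH hBHnd w).2.1 = 0 ∧ (w - pmG BH hBHnd w).2.2 = 0) ∧
    -- natural reductivity: Q₋([u,v]_m, w) + Q₋(v, [u,w]_m) = 0 on m
    (∀ u v w : H × D × Dual ℝ H, u.2.2 = BH u.1 → v.2.2 = BH v.1 → w.2.2 = BH w.1 →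
      Qminus BH BD (pmG BH hBHnd (dbr BD π u v)) w
        + Qminus BH BD v (pmG BH hBHnd (dbr BD π u w)) = 0) := by
  refine ⟨eq_zero_of_forall_Qminus_eq_zero BH BD hBDnd,
    Qminus_dbr_left BH BD hBHinv hBDsymm hBDinv π hπskew,
    eq_zero_of_forall_Qminus_inl_inl_eq_zero BH BD hBHnd,
    forall_Qminus_inl_eq_zero_iff BH BD,
    dbr_inl_snd_snd_eq_of_snd_snd_eq BH BD hBHinv π,
    lam_add BH hBHnd, lam_smul BH hBHnd, lam_snd_snd BH hBHnd,
    existsUnique_lam_eq BH hBHnd,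
    Qminus_lam_lam BH hBHnd BD hBHsymm,
    fun w ↦ ⟨by simp [pmG], by simp [pmG], by simp [pmG]⟩,
    fun u v w _ hv hw ↦ Qminus_pmG_dbr_add_Qminus_pmG_dbr BH hBHnd BD hBHsymm hBDsymm hBHinv
      hBDinv π hπskew u v w hv hw⟩

/-- Theorem 3.1 (infinitesimal version): `Q₋` is nondegenerate, ad-invariant and
nondegenerate on `h`; `m = h^⊥ = {(h,x,ℓ(h))}` is ad(h)-invariant; `λ` is a linear
isometry of `(G(d), ⟨,⟩)` onto `(m, Q₋)`; and `g = h ⊕ m` is naturally reductive. -/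
theorem Gd_naturally_reductive
    (BH : LinearMap.BilinForm ℝ H)
    (hBHsymm : ∀ a b : H, BH a b = BH b a)
    (hBHnd : BH.Nondegenerate)
    (hBHinv : ∀ a b c : H, BH ⁅a, b⁆ c = - BH b ⁅a, c⁆)
    (BD : LinearMap.BilinForm ℝ D)
    (hBDsymm : ∀ x y : D, BD x y = BD y x)
    (hBDnd : BD.Nondegenerate)
    (hBDinv : ∀ x y z : D, BD ⁅x, y⁆ z = - BD y ⁅x, z⁆)
    (π : H →ₗ[ℝ] D →ₗ[ℝ] D)
    (hπder : ∀ a : H, ∀ x y : D, π a ⁅x, y⁆ = ⁅π a x, y⁆ + ⁅x, π a y⁆)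
    (hπhom : ∀ a b : H, π ⁅a, b⁆ = π a ∘ₗ π b - π b ∘ₗ π a)
    (hπskew : ∀ a : H, ∀ x y : D, BD (π a x) y = - BD x (π a y)) :
    -- Q₋ is nondegenerate
    (∀ u : H × D × Dual ℝ H, (∀ v : H × D × Dual ℝ H, Qminus BH BD u v = 0) → u = 0) ∧
    -- Q₋ is ad-invariant
    (∀ u v w : H × D × Dual ℝ H,
      Qminus BH BD (dbr BD π u v) w = - Qminus BH BD v (dbr BD π u w)) ∧
    -- Q₋ restricts nondegenerately to h
    (∀ a : H, (∀ b : H, Qminus BH BD (a, 0, 0) (b, 0, 0) = 0) → a = 0) ∧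
    -- m := h^⊥ equals {(h, x, ℓ(h))}
    (∀ u : H × D × Dual ℝ H, (∀ a : H, Qminus BH BD u (a, 0, 0) = 0) ↔ u.2.2 = BH u.1) ∧
    -- m is ad(h)-invariant: [h, m] ⊆ m
    (∀ a : H, ∀ u : H × D × Dual ℝ H, u.2.2 = BH u.1 →
      (dbr BD π (a, 0, 0) u).2.2 = BH (dbr BD π (a, 0, 0) u).1) ∧
    -- λ is linear
    (∀ u v : D × Dual ℝ H, lam BH hBHnd (u + v) = lam BH hBHnd u + lam BH hBHnd v) ∧
    (∀ (c : ℝ) (u : D × Dual ℝ H), lam BH hBHnd (c • u) = c • lam BH hBHnd u) ∧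
    -- λ maps G(d) bijectively onto m
    (∀ u : D × Dual ℝ H, (lam BH hBHnd u).2.2 = BH (lam BH hBHnd u).1) ∧
    (∀ w : H × D × Dual ℝ H, w.2.2 = BH w.1 → ∃! u : D × Dual ℝ H, lam BH hBHnd u = w) ∧
    -- λ is an isometry from (G(d), ⟨,⟩) to (m, Q₋|_{m×m})
    (∀ u v : D × Dual ℝ H,
      Qminus BH BD (lam BH hBHnd u) (lam BH hBHnd v) = gform BH hBHnd BD u v) ∧
    -- pmG is the projection onto m along h
    (∀ w : H × D × Dual ℝ H, (pmG BH hBHnd w).2.2 = BH (pmG BH hBHnd w).1 ∧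
      (w - pmG BH hBHnd w).2.1 = 0 ∧ (w - pmG BH hBHnd w).2.2 = 0) ∧
    -- natural reductivity: Q₋([u,v]_m, w) + Q₋(v, [u,w]_m) = 0 on m
    (∀ u v w : H × D × Dual ℝ H, u.2.2 = BH u.1 → v.2.2 = BH v.1 → w.2.2 = BH w.1 →
      Qminus BH BD (pmG BH hBHnd (dbr BD π u v)) w
        + Qminus BH BD v (pmG BH hBHnd (dbr BD π u w)) = 0) :=
  Gd_naturally_reductive_general BH hBHsymm hBHnd hBHinv BD hBDsymm hBDnd hBDinv π hπskew
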